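/- Let V_1, V_2 be subspaces of codimension 1 inside a subspace U of ℝ^n, and for i = 1,2 choose a unit vector u_i ∈ U ∩ V_i^⊥. Then dist(V_1, V_2) = dist(u_1, u_2) = ‖u_1 ∧ u_2‖. -/

import Mathlib

open scoped RealInnerProductSpace

noncomputable section

/-- The norm `‖x ∧ y‖` in `⋀² ℝⁿ` (Gram identity). -/
def wedgeTwoNorm {n : ℕ} (x y : EuclideanSpace ℝ (Fin n)) : ℝ :=
  Real.sqrt (‖x‖ ^ 2 * ‖y‖ ^ 2 - (⟪x, y⟫ : ℝ) ^ 2)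

/-- The projective distance `dist(x,y) = ‖x ∧ y‖ / (‖x‖ ‖y‖)`. -/
def projDist {n : ℕ} (x y : EuclideanSpace ℝ (Fin n)) : ℝ :=
  wedgeTwoNorm x y / (‖x‖ * ‖y‖)

/-- The distance `dist(x,V) = ‖proj_{V^⊥} x‖ / ‖x‖`. -/
def distToSub {n : ℕ} (x : EuclideanSpace ℝ (Fin n))
    (V : Submodule ℝ (EuclideanSpace ℝ (Fin n))) : ℝ :=
  ‖(Submodule.orthogonalProjection Vᗮ x : EuclideanSpace ℝ (Fin n))‖ / ‖x‖

/-- The distance `dist(V₁,V₂) = sup {dist(v,V₂) : v ∈ V₁, v ≠ 0}`. -/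
def distSub {n : ℕ} (V₁ V₂ : Submodule ℝ (EuclideanSpace ℝ (Fin n))) : ℝ :=
  sSup {d : ℝ | ∃ v ∈ V₁, v ≠ 0 ∧ d = distToSub v V₂}

/-- A codimension-one subspace together with a unit normal inside `U` spans `U`. -/
lemma aux_sup_span {n : ℕ} (U W : Submodule ℝ (EuclideanSpace ℝ (Fin n)))
    (hWU : W ≤ U) (hcod : Module.finrank ℝ W + 1 = Module.finrank ℝ U)
    (u : EuclideanSpace ℝ (Fin n)) (hu : ‖u‖ = 1) (huU : u ∈ U) (huW : u ∈ Wᗮ) :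
    W ⊔ Submodule.span ℝ {u} = U := by
  have hu0 : u ≠ 0 := by intro h; rw [h, norm_zero] at hu; norm_num at hu
  have hspan : Submodule.span ℝ {u} ≤ Wᗮ := by
    rw [Submodule.span_le, Set.singleton_subset_iff]; exact huW
  have hinf : W ⊓ Submodule.span ℝ {u} = ⊥ :=
    (W.orthogonal_disjoint.mono_right hspan).eq_bot
  have hle : W ⊔ Submodule.span ℝ {u} ≤ U := by
    refine sup_le hWU ?_
    rw [Submodule.span_le, Set.singleton_subset_iff]; exact huU
  refine Submodule.eq_of_le_of_finrank_le hle ?_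
  have := Submodule.finrank_sup_add_finrank_inf_eq W (Submodule.span ℝ {u})
  rw [hinf, finrank_bot, finrank_span_singleton hu0] at this
  omega

/-- For `v ∈ U`, the projection of `v` to `Wᗮ` is `⟪u, v⟫ • u`. -/
lemma aux_proj {n : ℕ} (U W : Submodule ℝ (EuclideanSpace ℝ (Fin n)))
    (hWU : W ≤ U) (hcod : Module.finrank ℝ W + 1 = Module.finrank ℝ U)
    (u : EuclideanSpace ℝ (Fin n)) (hu : ‖u‖ = 1) (huU : u ∈ U) (huW : u ∈ Wᗮ)
    (v : EuclideanSpace ℝ (Fin n)) (hv : v ∈ U) :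
    (Submodule.orthogonalProjection Wᗮ v : EuclideanSpace ℝ (Fin n)) = (⟪u, v⟫ : ℝ) • u := by
  have hv' : v ∈ W ⊔ Submodule.span ℝ {u} := by
    rw [aux_sup_span U W hWU hcod u hu huU huW]; exact hv
  obtain ⟨a, ha, b, hb, rfl⟩ := Submodule.mem_sup.mp hv'
  obtain ⟨c, rfl⟩ := Submodule.mem_span_singleton.mp hb
  have hinner : (⟪u, a + c • u⟫ : ℝ) = c := by
    rw [inner_add_right, real_inner_smul_right,
      (Submodule.mem_orthogonal' W u).mp huW a ha, real_inner_self_eq_norm_sq, hu]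
    ring
  rw [hinner]
  refine Submodule.eq_starProjection_of_mem_orthogonal (K := Wᗮ) (Submodule.smul_mem _ _ huW) ?_
  have : a + c • u - c • u = a := by abel
  rw [this]
  exact W.le_orthogonal_orthogonal ha

/-- Let `V₁, V₂` be nonzero subspaces of codimension `1`
inside a subspace `U` of `ℝⁿ`, and for `i = 1,2` let `uᵢ` be a unit vector in
`U ∩ Vᵢᗮ`.  Then `dist(V₁,V₂) = dist(u₁,u₂) = ‖u₁ ∧ u₂‖`. -/
theorem stmt9 (n : ℕ)
    (U V₁ V₂ : Submodule ℝ (EuclideanSpace ℝ (Fin n)))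
    (hV₁ : V₁ ≠ ⊥) (hV₂ : V₂ ≠ ⊥) (h₁U : V₁ ≤ U) (h₂U : V₂ ≤ U)
    (hcod₁ : Module.finrank ℝ V₁ + 1 = Module.finrank ℝ U)
    (hcod₂ : Module.finrank ℝ V₂ + 1 = Module.finrank ℝ U)
    (u₁ u₂ : EuclideanSpace ℝ (Fin n)) (hu₁ : ‖u₁‖ = 1) (hu₂ : ‖u₂‖ = 1)
    (hu₁U : u₁ ∈ U) (hu₂U : u₂ ∈ U) (hu₁V : u₁ ∈ V₁ᗮ) (hu₂V : u₂ ∈ V₂ᗮ) :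
    distSub V₁ V₂ = projDist u₁ u₂ ∧ distSub V₁ V₂ = wedgeTwoNorm u₁ u₂ := by
  set c : ℝ := ⟪u₁, u₂⟫ with hc
  set p : EuclideanSpace ℝ (Fin n) := u₂ - c • u₁ with hp
  -- p ∈ V₁
  have hpV₁ : p ∈ V₁ := by
    have h2 : u₂ ∈ V₁ ⊔ Submodule.span ℝ {u₁} := by
      rw [aux_sup_span U V₁ h₁U hcod₁ u₁ hu₁ hu₁U hu₁V]; exact hu₂U
    obtain ⟨a, ha, b, hb, hab⟩ := Submodule.mem_sup.mp h2
    obtain ⟨t, rfl⟩ := Submodule.mem_span_singleton.mp hb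
    have ht : c = t := by
      rw [hc, ← hab, inner_add_right, real_inner_smul_right,
        (Submodule.mem_orthogonal' V₁ u₁).mp hu₁V a ha, real_inner_self_eq_norm_sq, hu₁]
      ring
    have : p = a := by rw [hp, ← hab, ht]; abel
    rw [this]; exact ha
  -- ‖p‖² = 1 - c²
  have hpsq : ‖p‖ ^ 2 = 1 - c ^ 2 := by
    have := norm_sub_sq_real u₂ (c • u₁)
    rw [norm_smul, real_inner_smul_right, hu₁, hu₂, real_inner_comm] at this
    rw [hp, this, ← hc]
    simp [abs_mul_abs_self]
    ring
  -- inner with u₂ equals inner with p on V₁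
  have hinner_eq : ∀ v ∈ V₁, (⟪u₂, v⟫ : ℝ) = ⟪p, v⟫ := by
    intro v hv
    rw [hp, inner_sub_left, real_inner_smul_left,
      (Submodule.mem_orthogonal' V₁ u₁).mp hu₁V v hv]
    ring
  -- distToSub formula on U
  have hdist : ∀ v ∈ V₁, distToSub v V₂ = |(⟪p, v⟫ : ℝ)| / ‖v‖ := by
    intro v hv
    rw [distToSub, aux_proj U V₂ h₂U hcod₂ u₂ hu₂ hu₂U hu₂V v (h₁U hv),
      norm_smul, hu₂, hinner_eq v hv]
    simp
  -- the set
  set S : Set ℝ := {d : ℝ | ∃ v ∈ V₁, v ≠ 0 ∧ d = distToSub v V₂} with hS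
  have hub : ∀ d ∈ S, d ≤ ‖p‖ := by
    rintro d ⟨v, hv, hv0, rfl⟩
    rw [hdist v hv]
    rw [div_le_iff₀ (norm_pos_iff.mpr hv0)]
    exact abs_real_inner_le_norm p v
  have hmem : ‖p‖ ∈ S := by
    by_cases hp0 : p = 0
    · obtain ⟨v, hv, hv0⟩ := Submodule.exists_mem_ne_zero_of_ne_bot hV₁
      refine ⟨v, hv, hv0, ?_⟩
      rw [hdist v hv, hp0]
      simp
    · refine ⟨p, hpV₁, hp0, ?_⟩
      rw [hdist p hpV₁, real_inner_self_eq_norm_sq, abs_of_nonneg (by positivity)]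
      rw [eq_div_iff (norm_ne_zero_iff.mpr hp0)]
      ring
  have hsup : distSub V₁ V₂ = ‖p‖ := by
    rw [distSub]
    exact le_antisymm (csSup_le ⟨_, hmem⟩ hub) (le_csSup ⟨‖p‖, hub⟩ hmem)
  have hwedge : wedgeTwoNorm u₁ u₂ = ‖p‖ := by
    rw [wedgeTwoNorm, hu₁, hu₂, ← hc,
      show (1:ℝ) ^ 2 * 1 ^ 2 - c ^ 2 = ‖p‖ ^ 2 by rw [hpsq]; ring,
      Real.sqrt_sq (norm_nonneg p)]
  constructor
  · rw [hsup, projDist, hwedge, hu₁, hu₂]; norm_num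
  · rw [hsup, hwedge]
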